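/- arXiv:2012.12174 — 2 statements merged into one kernel-verified Lean document; each statement's English description precedes it below -/
import Mathlib

section
/- Let p ≥ 1 and let X be a real random variable with density f and E[|X|^p] = μ^p with μ > 0. Then the differential entropy satisfies h(X) ≤ log₂(2 Γ((p+1)/p) (p e)^{1/p} μ). -/
/-!
By Gibbs' inequality, `-∫ f log f ≤ -∫ f log g` for every positive probability density `g`.
For the generalized Gaussian `g = exp (-|x| ^ p / (p μ ^ p)) / Z`, the function `log g` is affine
in `|x| ^ p`, so this cross entropy only depends on the mass and the `p`-th moment of `f`; it
equals `1 / p + log Z`, which is the claimed bound in nats.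
-/

open MeasureTheory Real Set

section Gibbs

variable {α : Type*} [MeasurableSpace α] {μ : Measure α} {f g : α → ℝ}

lemma mul_log_sub_mul_log_le_sub {a b : ℝ} (ha : 0 ≤ a) (hb : 0 < b) :
    a * log b - a * log a ≤ b - a := by
  rcases ha.eq_or_lt with rfl | ha
  · simpa using hb.le
  calc a * log b - a * log a = a * log (b / a) := by rw [log_div hb.ne' ha.ne']; ring
    _ ≤ a * (b / a - 1) :=
      mul_le_mul_of_nonneg_left (log_le_sub_one_of_pos (div_pos hb ha)) ha.le
    _ = b - a := by field_simp

theorem integral_mul_log_le_integral_mul_log (hf : 0 ≤ᵐ[μ] f) (hg : ∀ᵐ x ∂μ, 0 < g x)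
    (hfi : Integrable f μ) (hgi : Integrable g μ)
    (hflogf : Integrable (fun x => f x * log (f x)) μ)
    (hflogg : Integrable (fun x => f x * log (g x)) μ)
    (hmass : ∫ x, g x ∂μ ≤ ∫ x, f x ∂μ) :
    ∫ x, f x * log (g x) ∂μ ≤ ∫ x, f x * log (f x) ∂μ := by
  have key : ∫ x, (f x * log (g x) - f x * log (f x)) ∂μ ≤ ∫ x, (g x - f x) ∂μ :=
    integral_mono_ae (hflogg.sub hflogf) (hgi.sub hfi) <| by
      filter_upwards [hf, hg] with x hfx hgx using mul_log_sub_mul_log_le_sub hfx hgx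
  rw [integral_sub hflogg hflogf, integral_sub hgi hfi] at key
  linarith

end Gibbs

lemma integrable_comp_abs_of_integrableOn_Ioi {E : Type*} [NormedAddCommGroup E] {f : ℝ → E}
    (hf : IntegrableOn f (Ioi 0)) : Integrable fun x => f |x| := by
  have hIoi : IntegrableOn (fun x => f |x|) (Ioi 0) :=
    hf.congr_fun (fun x hx => by rw [abs_of_pos (mem_Ioi.mp hx)]) measurableSet_Ioi
  have hIic : IntegrableOn (fun x => f |x|) (Iic 0) := by
    have hneg : MeasurableEmbedding fun x : ℝ => -x := (Homeomorph.neg ℝ).measurableEmbedding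
    rw [← Measure.map_neg_eq_self (volume : Measure ℝ), hneg.integrableOn_map_iff]
    simp_rw [Function.comp_def, abs_neg, neg_preimage, neg_Iic, neg_zero]
    exact Iff.mpr integrableOn_Ici_iff_integrableOn_Ioi hIoi
  simpa [Iic_union_Ioi] using hIic.union hIoi

lemma integrable_exp_neg_mul_abs_rpow {p b : ℝ} (hp : 0 < p) (hb : 0 < b) :
    Integrable fun x : ℝ => exp (-b * |x| ^ p) :=
  integrable_comp_abs_of_integrableOn_Ioi (f := fun x => exp (-b * x ^ p)) <| by
    simpa using integrableOn_rpow_mul_exp_neg_mul_rpow neg_one_lt_zero hp hb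

lemma integral_exp_neg_mul_abs_rpow {p b : ℝ} (hp : 0 < p) (hb : 0 < b) :
    ∫ x : ℝ, exp (-b * |x| ^ p) = 2 * b ^ (-1 / p) * Gamma (1 / p + 1) := by
  rw [integral_comp_abs (f := fun x => exp (-b * x ^ p)), integral_exp_neg_mul_rpow hp hb,
    mul_assoc]

noncomputable def genGaussianPDF (p μ x : ℝ) : ℝ :=
  exp (-|x| ^ p / (p * μ ^ p)) / (2 * Gamma ((p + 1) / p) * p ^ (1 / p) * μ)

section GenGaussian

variable {p μ : ℝ}

lemma genGaussianPDF_eq (x : ℝ) : genGaussianPDF p μ x =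
    exp (-(p * μ ^ p)⁻¹ * |x| ^ p) / (2 * Gamma ((p + 1) / p) * p ^ (1 / p) * μ) := by
  rw [genGaussianPDF]
  congr 2
  ring

variable (hp : 0 < p) (hμ : 0 < μ)
include hp hμ

lemma genGaussianPDF_normalizer_pos : 0 < 2 * Gamma ((p + 1) / p) * p ^ (1 / p) * μ := by
  have := Gamma_pos_of_pos (div_pos (by linarith) hp)
  have := rpow_pos_of_pos hp (1 / p)
  positivity

lemma genGaussianPDF_pos (x : ℝ) : 0 < genGaussianPDF p μ x :=
  div_pos (exp_pos _) (genGaussianPDF_normalizer_pos hp hμ)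

lemma integrable_genGaussianPDF : Integrable (genGaussianPDF p μ) := by
  simp_rw [funext genGaussianPDF_eq]
  exact (integrable_exp_neg_mul_abs_rpow hp (by positivity)).div_const _

lemma integral_genGaussianPDF : ∫ x, genGaussianPDF p μ x = 1 := by
  have hscale : ((p * μ ^ p)⁻¹) ^ (-1 / p) = p ^ (1 / p) * μ := by
    rw [inv_rpow (by positivity), ← rpow_neg (by positivity), neg_div, neg_neg,
      mul_rpow hp.le (by positivity), ← rpow_mul hμ.le, mul_one_div_cancel hp.ne', rpow_one]
  have hGamma : (p + 1) / p = 1 / p + 1 := by rw [add_div, div_self hp.ne', add_comm, one_div]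
  simp_rw [genGaussianPDF_eq]
  rw [integral_div, integral_exp_neg_mul_abs_rpow hp (by positivity), hscale, hGamma,
    div_eq_one_iff_eq (hGamma ▸ genGaussianPDF_normalizer_pos hp hμ).ne']
  ring

lemma log_genGaussianPDF (x : ℝ) : log (genGaussianPDF p μ x) =
    -|x| ^ p / (p * μ ^ p) - log (2 * Gamma ((p + 1) / p) * p ^ (1 / p) * μ) := by
  rw [genGaussianPDF, log_div (exp_ne_zero _) (genGaussianPDF_normalizer_pos hp hμ).ne', log_exp]

variable {f : ℝ → ℝ}

lemma mul_log_genGaussianPDF (x : ℝ) : f x * log (genGaussianPDF p μ x) =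
    -(p * μ ^ p)⁻¹ * (|x| ^ p * f x) -
      log (2 * Gamma ((p + 1) / p) * p ^ (1 / p) * μ) * f x := by
  rw [log_genGaussianPDF hp hμ]
  ring

lemma integrable_mul_log_genGaussianPDF (hfi : Integrable f)
    (hmomi : Integrable fun x => |x| ^ p * f x) :
    Integrable fun x => f x * log (genGaussianPDF p μ x) := by
  simp_rw [mul_log_genGaussianPDF hp hμ]
  exact (hmomi.const_mul _).sub (hfi.const_mul _)

lemma integral_mul_log_genGaussianPDF (hfi : Integrable f)
    (hmomi : Integrable fun x => |x| ^ p * f x) (hone : ∫ x, f x = 1)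
    (hmom : ∫ x, |x| ^ p * f x = μ ^ p) :
    ∫ x, f x * log (genGaussianPDF p μ x) =
      -log (2 * Gamma ((p + 1) / p) * (p * exp 1) ^ (1 / p) * μ) := by
  have hZ := genGaussianPDF_normalizer_pos hp hμ
  simp_rw [mul_log_genGaussianPDF hp hμ]
  rw [integral_sub (hmomi.const_mul _) (hfi.const_mul _), integral_const_mul, integral_const_mul,
    hmom, hone, mul_rpow hp.le (exp_pos 1).le, exp_one_rpow,
    show 2 * Gamma ((p + 1) / p) * (p ^ (1 / p) * exp (1 / p)) * μ =
      2 * Gamma ((p + 1) / p) * p ^ (1 / p) * μ * exp (1 / p) by ring,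
    log_mul hZ.ne' (exp_ne_zero _), log_exp]
  field_simp
  ring

end GenGaussian

theorem max_entropy_Lp_constraint_general (p μ : ℝ) (hp : 1 ≤ p) (hμ : 0 < μ)
    (f : ℝ → ℝ) (hnn : ∀ x, 0 ≤ f x)
    (hone : ∫ x : ℝ, f x = 1)
    (hmom_int : Integrable (fun x : ℝ => |x| ^ p * f x))
    (hmom : ∫ x : ℝ, |x| ^ p * f x = μ ^ p)
    (hent_int : Integrable (fun x : ℝ => f x * Real.logb 2 (f x))) :
    -∫ x : ℝ, f x * Real.logb 2 (f x)
      ≤ Real.logb 2 (2 * Real.Gamma ((p + 1) / p) * (p * Real.exp 1) ^ (1 / p) * μ) := by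
  have hp₀ : 0 < p := by linarith
  have hfi : Integrable f := .of_integral_ne_zero (by simp [hone])
  have hflogf : Integrable fun x => f x * log (f x) := by
    simpa [logb, mul_div_assoc', div_mul_cancel₀ _ (log_pos one_lt_two).ne'] using
      hent_int.mul_const (log 2)
  have hgibbs := integral_mul_log_le_integral_mul_log (ae_of_all _ hnn)
    (ae_of_all _ (genGaussianPDF_pos hp₀ hμ)) hfi (integrable_genGaussianPDF hp₀ hμ) hflogf
    (integrable_mul_log_genGaussianPDF hp₀ hμ hfi hmom_int)
    (by rw [integral_genGaussianPDF hp₀ hμ, hone])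
  rw [integral_mul_log_genGaussianPDF hp₀ hμ hfi hmom_int hone hmom] at hgibbs
  simp_rw [logb, mul_div_assoc']
  rw [integral_div, ← neg_div]
  gcongr
  linarith

/-- Maximum-entropy bound under an `L^p`-moment constraint: if `X` has density `f` with
`E[|X|^p] = μ^p`, then `h(X) ≤ log₂ (2 Γ((p+1)/p) (p e)^{1/p} μ)` (entropy in bits). -/
theorem max_entropy_Lp_constraint (p μ : ℝ) (hp : 1 ≤ p) (hμ : 0 < μ)
    (f : ℝ → ℝ) (hf : Measurable f) (hnn : ∀ x, 0 ≤ f x)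
    (hone : ∫ x : ℝ, f x = 1)
    (hmom_int : Integrable (fun x : ℝ => |x| ^ p * f x))
    (hmom : ∫ x : ℝ, |x| ^ p * f x = μ ^ p)
    (hent_int : Integrable (fun x : ℝ => f x * Real.logb 2 (f x))) :
    -∫ x : ℝ, f x * Real.logb 2 (f x)
      ≤ Real.logb 2 (2 * Real.Gamma ((p + 1) / p) * (p * Real.exp 1) ^ (1 / p) * μ) :=
  max_entropy_Lp_constraint_general p μ hp hμ f hnn hone hmom_int hmom hent_int
end

section
/- For fixed μ > 0 and x ∈ ℝ with |x| < μ, lim_{p→∞} exp(-|x|^p/(p μ^p)) / (2 Γ((p+1)/p) p^{1/p} μ) = 1/(2μ); and for |x| > μ the limit is 0. -/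
/-!
With `r = |x| / μ` the exponent is `-(r ^ p / p)`, and `r ^ p / p` tends to `0` for `r < 1` and
to `∞` for `r > 1`, while the normalizer `2 Γ(1 + 1/p) p ^ (1/p) μ` tends to `2 μ`.
-/

open Real Filter Topology

theorem tendsto_Gamma_add_one_div_self :
    Tendsto (fun p : ℝ => Gamma ((p + 1) / p)) atTop (𝓝 1) := by
  have hfrac : Tendsto (fun p : ℝ => 1 + p⁻¹) atTop (𝓝 1) := by
    simpa using tendsto_inv_atTop_zero.const_add (1 : ℝ)
  have hcont : ContinuousAt Gamma 1 :=
    (differentiableAt_Gamma fun m h => by linarith [m.cast_nonneg (α := ℝ)]).continuousAt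
  refine (Gamma_one ▸ hcont.tendsto.comp hfrac).congr' ?_
  filter_upwards [eventually_ne_atTop 0] with p hp
  simp [add_div, div_self hp, add_comm]

theorem tendsto_generalizedGaussian_normalizer (μ : ℝ) :
    Tendsto (fun p : ℝ => 2 * Gamma ((p + 1) / p) * p ^ (1 / p) * μ) atTop (𝓝 (2 * μ)) := by
  simpa using ((tendsto_Gamma_add_one_div_self.const_mul 2).mul tendsto_rpow_div).mul_const μ

theorem tendsto_exp_neg_rpow_div_self_of_lt_one {r : ℝ} (h₀ : 0 ≤ r) (h₁ : r < 1) :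
    Tendsto (fun p : ℝ => exp (-(r ^ p / p))) atTop (𝓝 1) := by
  have hr : Tendsto (fun p : ℝ => r ^ p / p) atTop (𝓝 0) := by
    simpa using (tendsto_rpow_atTop_of_base_lt_one r (by linarith) h₁).div_atTop tendsto_id
  rw [← exp_zero, ← neg_zero]
  exact (continuous_exp.tendsto _).comp hr.neg

theorem tendsto_exp_neg_rpow_div_self_of_one_lt {r : ℝ} (h : 1 < r) :
    Tendsto (fun p : ℝ => exp (-(r ^ p / p))) atTop (𝓝 0) := by
  have hr : Tendsto (fun p : ℝ => r ^ p / p) atTop atTop := by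
    refine (tendsto_exp_mul_div_rpow_atTop 1 (log r) (log_pos h)).congr fun p => ?_
    rw [rpow_one, rpow_def_of_pos (by linarith), mul_comm]
  exact tendsto_exp_atBot.comp (tendsto_neg_atTop_atBot.comp hr)

theorem rpow_div_mul_rpow {a b : ℝ} (ha : 0 ≤ a) (hb : 0 ≤ b) (p : ℝ) :
    a ^ p / (p * b ^ p) = (a / b) ^ p / p := by
  rw [div_rpow ha hb, div_div, mul_comm]

/-- Pointwise convergence of the generalized Gaussian density with `L^p` norm `μ` to the
uniform density on `[-μ, μ]` as `p → ∞`: the limit is `1/(2μ)` for `|x| < μ` and `0`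
for `|x| > μ`. -/
theorem generalized_gaussian_tendsto_uniform (μ : ℝ) (hμ : 0 < μ) (x : ℝ) :
    (|x| < μ →
      Tendsto
        (fun p : ℝ => Real.exp (-(|x| ^ p) / (p * μ ^ p)) /
          (2 * Real.Gamma ((p + 1) / p) * p ^ (1 / p) * μ))
        atTop (nhds (1 / (2 * μ)))) ∧
    (|x| > μ →
      Tendsto
        (fun p : ℝ => Real.exp (-(|x| ^ p) / (p * μ ^ p)) /
          (2 * Real.Gamma ((p + 1) / p) * p ^ (1 / p) * μ))
        atTop (nhds 0)) := by
  simp only [neg_div, rpow_div_mul_rpow (abs_nonneg x) hμ.le]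
  have hden := tendsto_generalizedGaussian_normalizer μ
  refine ⟨fun hx => ?_, fun hx => ?_⟩
  · exact (tendsto_exp_neg_rpow_div_self_of_lt_one (div_nonneg (abs_nonneg x) hμ.le)
      ((div_lt_one hμ).mpr hx)).div hden (by positivity)
  · have := (tendsto_exp_neg_rpow_div_self_of_one_lt ((one_lt_div hμ).mpr hx)).div hden
      (by positivity)
    rwa [zero_div] at this
end
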